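/- arXiv:0907.2925 — 2 statements merged into one kernel-verified Lean document; each statement's English description precedes it below -/
import Mathlib

section
/- There exists a countable structure M, an automorphism α and a self-embedding σ of M such that α∘σ (in the sense: first α, then σ) is not equal to σ∘α′ for any automorphism α′; i.e. the left coset of Aut(M) determined by σ differs from the right coset. Concretely, for M an equivalence relation with exactly two infinite classes, with α swapping the classes and σ the identity on one class and a non-surjective embedding on the other, ασ ∉ σ·Aut(M). -/
open FirstOrder FirstOrder.Language FirstOrder.Language.Structure

/-! An automorphism maps each `E`-class onto an `E`-class. If `σ ∘ α = α' ∘ σ` with `σ` fixing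
the class `C₀` pointwise, then `α'` maps `C₀` onto `σ(α(C₀)) = σ(C₁)`, which is therefore a class;
but `σ(C₁)` is a proper subset of the class `C₁`. -/

section AdjSet

variable {M N : Type*} [Language.graph.Structure M] [Language.graph.Structure N]

def adjSet (c : M) : Set M := {x | RelMap adj ![c, x]}

theorem map_adj_iff {F : Type*} [FunLike F M N] [StrongHomClass Language.graph F M N]
    (f : F) (a b : M) : RelMap adj ![f a, f b] ↔ RelMap adj ![a, b] := by
  have hcomp : ![f a, f b] = f ∘ ![a, b] := by
    ext i
    fin_cases i <;> rfl
  rw [hcomp, StrongHomClass.map_rel]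

theorem image_adjSet_subset {F : Type*} [FunLike F M N] [StrongHomClass Language.graph F M N]
    (f : F) (c : M) : f '' adjSet c ⊆ adjSet (f c) := by
  rintro _ ⟨x, hx, rfl⟩
  exact (map_adj_iff f c x).2 hx

theorem FirstOrder.Language.Equiv.image_adjSet (f : M ≃[Language.graph] N) (c : M) :
    f '' adjSet c = adjSet (f c) := by
  refine (image_adjSet_subset f c).antisymm fun y hy => ⟨f.symm y, ?_, f.apply_symm_apply y⟩
  exact (map_adj_iff f c _).1 (by rwa [f.apply_symm_apply])

theorem comp_ne_comp_of_image_adjSet_ne (α α' : M ≃[Language.graph] M)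
    (σ : M ↪[Language.graph] M) {c : M} (hσ : ∀ x ∈ adjSet c, σ x = x)
    (hne : ∀ d : M, σ '' adjSet (α c) ≠ adjSet d) : ⇑σ ∘ ⇑α ≠ ⇑α' ∘ ⇑σ := by
  intro h
  apply hne (α' c)
  calc σ '' adjSet (α c) = (⇑σ ∘ ⇑α) '' adjSet c := by rw [Set.image_comp, α.image_adjSet]
    _ = α' '' (σ '' adjSet c) := by rw [h, Set.image_comp]
    _ = adjSet (α' c) := by rw [Set.image_congr hσ, Set.image_id', α'.image_adjSet]

end AdjSet

namespace TwoClasses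

instance : Language.graph.Structure (Bool × ℕ) where
  RelMap | .adj => fun x => (x 0).1 = (x 1).1

theorem adjSet_infinite (c : Bool × ℕ) : (adjSet c).Infinite :=
  Set.infinite_of_injective_forall_mem (Prod.mk_right_injective c.1) fun _ => rfl

theorem map_rel_of_fst {f : Bool × ℕ → Bool × ℕ} {g : Bool → Bool} (hg : Function.Injective g)
    (hf : ∀ x, (f x).1 = g x.1) (x : Fin 2 → Bool × ℕ) : RelMap adj (f ∘ x) ↔ RelMap adj x := by
  change (f (x 0)).1 = (f (x 1)).1 ↔ (x 0).1 = (x 1).1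
  rw [hf, hf, hg.eq_iff]

def swap : (Bool × ℕ) ≃[Language.graph] (Bool × ℕ) where
  toEquiv := _root_.Equiv.prodCongr _root_.Equiv.boolNot (_root_.Equiv.refl ℕ)
  map_rel' := by
    rintro _ ⟨⟩ x
    exact map_rel_of_fst Bool.not_injective (fun _ => rfl) x

def shiftFun : Bool × ℕ → Bool × ℕ
  | (false, n) => (false, n)
  | (true, n) => (true, n + 1)

theorem shiftFun_injective : Function.Injective shiftFun := by
  rintro ⟨_ | _, m⟩ ⟨_ | _, n⟩ h <;> simp_all [shiftFun]

def shift : (Bool × ℕ) ↪[Language.graph] (Bool × ℕ) where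
  toFun := shiftFun
  inj' := shiftFun_injective
  map_rel' := by
    rintro _ ⟨⟩ x
    exact map_rel_of_fst Function.injective_id (fun ⟨b, _⟩ => by cases b <;> rfl) x

theorem shift_ne_true_zero (x : Bool × ℕ) : shift x ≠ (true, 0) := by
  change shiftFun x ≠ _
  rcases x with ⟨_ | _, n⟩ <;> simp [shiftFun]

theorem image_shift_adjSet_ne (d : Bool × ℕ) : shift '' adjSet (true, 0) ≠ adjSet d := by
  intro h
  have h₁ : (true, 1) ∈ adjSet d := h ▸ ⟨(true, 0), rfl, rfl⟩
  obtain ⟨x, -, hx⟩ := h ▸ (show (true, 0) ∈ adjSet d from h₁)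
  exact shift_ne_true_zero x hx

end TwoClasses

open TwoClasses in
/-- There is a countable structure `M` (an equivalence relation with exactly two infinite
classes), an automorphism `α` swapping the classes, and a self-embedding `σ` which is the
identity on one class and non-surjective, such that `ασ` (first `α`, then `σ`, i.e. the
function `σ ∘ α`) does not lie in the right coset `σ·Aut(M)` (whose elements are the
functions `α' ∘ σ`). -/
theorem left_coset_ne_right_coset :
    ∃ (M : Type) (_ : Countable M) (_inst : Language.graph.Structure M),
      Equivalence (fun a b : M => RelMap adj ![a, b]) ∧
      (∃ c₀ c₁ : M,
        ¬ RelMap adj ![c₀, c₁] ∧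
        (∀ x : M, RelMap adj ![c₀, x] ∨ RelMap adj ![c₁, x]) ∧
        {x : M | RelMap adj ![c₀, x]}.Infinite ∧
        {x : M | RelMap adj ![c₁, x]}.Infinite ∧
        ∃ (α : M ≃[Language.graph] M) (σ : M ↪[Language.graph] M),
          (∀ x : M, RelMap adj ![c₀, x] ↔ RelMap adj ![c₁, α x]) ∧
          (∀ x : M, RelMap adj ![c₀, x] → σ x = x) ∧
          ¬ Function.Surjective ⇑σ ∧
          ∀ α' : M ≃[Language.graph] M, ⇑σ ∘ ⇑α ≠ ⇑α' ∘ ⇑σ) := by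
  have hσ : ∀ x ∈ adjSet ((false, 0) : Bool × ℕ), shift x = x := by
    rintro ⟨b, n⟩ (rfl : false = b)
    rfl
  refine ⟨Bool × ℕ, inferInstance, inferInstance, ⟨fun _ => rfl, Eq.symm, Eq.trans⟩,
    (false, 0), (true, 0), Bool.false_ne_true, ?_, adjSet_infinite _, adjSet_infinite _,
    swap, shift, ?_, hσ, ?_, fun α' => comp_ne_comp_of_image_adjSet_ne swap α' shift hσ
      image_shift_adjSet_ne⟩
  · rintro ⟨_ | _, _⟩
    exacts [Or.inl rfl, Or.inr rfl]
  · rintro ⟨_ | _, _⟩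
    exacts [iff_of_true rfl rfl, iff_of_false nofun nofun]
  · intro h
    obtain ⟨x, hx⟩ := h (true, 0)
    exact shift_ne_true_zero x hx
end

section
/- An ℵ0-categorical structure M is contractible (has a constant endomorphism) if and only if for every pair of finite tuples c̄₀, c̄₁ from M of the same length there exists an endomorphism σ of M with c̄₀^σ = c̄₁^σ. -/
/-!
Call `a : M` totally reflexive if `R (a, …, a)` holds for every relation `R` that holds somewhere
in `M`; for a relational language these are exactly the values of constant endomorphisms.
Merging pairs of points repeatedly merges any finite set of points, and an endomorphism that is
constant on the entries of a tuple satisfying `R` sends it to a constant tuple satisfying `R`.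
For finite `M` this already yields a totally reflexive point. In general it shows, by
compactness, that the complete theory of `M` together with `R (c, …, c)` for a new constant `c`
and every such `R` is satisfiable; a countable model of it (Löwenheim–Skolem) is isomorphic to
`M` by `ℵ₀`-categoricity, and the image of `c` is totally reflexive.
-/

universe w

open FirstOrder FirstOrder.Language Structure Cardinal

namespace FirstOrder.Language

variable (L : Language) {M : Type*} [L.Structure M]

def IsTotallyReflexive (a : M) : Prop :=
  ∀ ⦃n⦄ (R : L.Relations n) (x : Fin n → M), RelMap R x → RelMap R fun _ : Fin n => a

variable {L}

def Hom.const [L.IsRelational] (a : M) (ha : L.IsTotallyReflexive a) : M →[L] M where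
  toFun _ := a
  map_fun' f := isEmptyElim f
  map_rel' R x hx := ha R x hx

theorem Hom.relMap_const_of_forall_map_eq {N : Type*} [L.Structure N] (τ : M →[L] N) {c : N}
    {n : ℕ} {R : L.Relations n} {x : Fin n → M} (hx : RelMap R x) (hτ : ∀ i, τ (x i) = c) :
    RelMap R fun _ : Fin n => c := by
  have hτx : ⇑τ ∘ x = fun _ => c := funext hτ
  exact hτx ▸ τ.map_rel R x hx

theorem exists_hom_const_on_finset [Nonempty M] (H : ∀ a b : M, ∃ σ : M →[L] M, σ a = σ b)
    (s : Finset M) : ∃ (τ : M →[L] M) (c : M), ∀ x ∈ s, τ x = c := by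
  classical
  induction s using Finset.induction_on with
  | empty => exact ⟨Hom.id L M, Classical.arbitrary M, by simp⟩
  | insert a s _ ih =>
    obtain ⟨τ, c, hc⟩ := ih
    obtain ⟨σ, hσ⟩ := H (τ a) c
    refine ⟨σ.comp τ, σ c, fun x hx => ?_⟩
    rcases Finset.mem_insert.1 hx with rfl | hx
    · exact hσ
    · simp only [Hom.comp_apply, hc x hx]

theorem exists_isTotallyReflexive_of_finite [Finite M] [Nonempty M]
    (H : ∀ a b : M, ∃ σ : M →[L] M, σ a = σ b) : ∃ a : M, L.IsTotallyReflexive a := by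
  have := Fintype.ofFinite M
  obtain ⟨τ, c, hc⟩ := exists_hom_const_on_finset H Finset.univ
  exact ⟨c, fun _ _ _ hx => τ.relMap_const_of_forall_map_eq hx fun _ => hc _ (Finset.mem_univ _)⟩

theorem Theory.exists_modelType_equiv_of_countable (T : L.Theory) (A : Type*) [L.Structure A]
    [A ⊨ T] [Countable A] [Infinite A] :
    ∃ N : Theory.ModelType.{_, _, w} T, #N = ℵ₀ ∧ Nonempty (A ≃[L] N) := by
  let e : A ≃ ULift.{w} ℕ := (nonempty_denumerable A).some.eqv.trans Equiv.ulift.symm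
  exact ⟨Theory.ModelType.equivInduced (M := Theory.ModelType.of T A) e,
    show #(ULift.{w} ℕ) = ℵ₀ by simp,
    ⟨e.inducedStructureEquiv⟩⟩

theorem _root_.Cardinal.Categorical.nonempty_equiv_of_countable {T : L.Theory}
    (hcat : Categorical.{_, _, w} ℵ₀ T) (A B : Type*) [L.Structure A] [L.Structure B] [A ⊨ T]
    [B ⊨ T] [Countable A] [Infinite A] [Countable B] [Infinite B] : Nonempty (A ≃[L] B) := by
  obtain ⟨NA, hNA, ⟨eA⟩⟩ := T.exists_modelType_equiv_of_countable A
  obtain ⟨NB, hNB, ⟨eB⟩⟩ := T.exists_modelType_equiv_of_countable B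
  obtain ⟨g⟩ := hcat NA NB hNA hNB
  exact ⟨eB.symm.comp (g.comp eA)⟩

variable (L) in
/-- `R (c, …, c)`: `equivSentence` turns the free variable `()` into the constant `L.con ()`. -/
def reflexivitySentence {n : ℕ} (R : L.Relations n) : L[[Unit]].Sentence :=
  Formula.equivSentence (R.formula fun _ => Term.var ())

theorem realize_reflexivitySentence {N : Type*} [L.Structure N] [L[[Unit]].Structure N]
    [(L.lhomWithConstants Unit).IsExpansionOn N] {n : ℕ} (R : L.Relations n) :
    N ⊨ L.reflexivitySentence R ↔ RelMap R fun _ : Fin n => (L.con () : N) := by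
  rw [reflexivitySentence, Formula.realize_equivSentence, Formula.realize_rel]
  rfl

variable (L M) in
def reflexivityTheory (s : Set M) : L[[Unit]].Theory :=
  {φ | ∃ (n : ℕ) (R : L.Relations n) (x : Fin n → M), RelMap R x ∧ (∀ i, x i ∈ s) ∧
    L.reflexivitySentence R = φ}

theorem reflexivityTheory_mono : Monotone (L.reflexivityTheory M) :=
  fun _ _ hst _ ⟨n, R, x, hx, hxs, hφ⟩ => ⟨n, R, x, hx, fun i => hst (hxs i), hφ⟩

theorem reflexivityTheory_univ_eq_iUnion :
    L.reflexivityTheory M Set.univ = ⋃ s : Finset M, L.reflexivityTheory M s := by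
  classical
  refine subset_antisymm ?_ (Set.iUnion_subset fun s => reflexivityTheory_mono (Set.subset_univ _))
  rintro φ ⟨n, R, x, hx, -, rfl⟩
  exact Set.mem_iUnion.2 ⟨Finset.univ.image x, n, R, x, hx, by simp, rfl⟩

theorem isSatisfiable_reflexivityTheory [Nonempty M]
    (H : ∀ a b : M, ∃ σ : M →[L] M, σ a = σ b) :
    ((L.lhomWithConstants Unit).onTheory (L.completeTheory M) ∪
      L.reflexivityTheory M Set.univ).IsSatisfiable := by
  rw [reflexivityTheory_univ_eq_iUnion, Set.union_iUnion,
    Theory.isSatisfiable_directed_union_iff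
      (Monotone.directed_le fun s t hst => Set.union_subset_union_right _
        (reflexivityTheory_mono (Finset.coe_subset.2 hst)))]
  intro s
  obtain ⟨τ, c, hc⟩ := exists_hom_const_on_finset H s
  let _ : (constantsOn Unit).Structure M := constantsOn.structure fun _ => c
  have hM : M ⊨ (L.lhomWithConstants Unit).onTheory (L.completeTheory M) ∪
      L.reflexivityTheory M s := by
    refine ((LHom.onTheory_model _ _).2 inferInstance).union ((Theory.model_iff _).2 ?_)
    rintro φ ⟨n, R, x, hx, hxs, rfl⟩
    exact (realize_reflexivitySentence R).2
      (τ.relMap_const_of_forall_map_eq hx fun i => hc _ (hxs i))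
  exact Theory.Model.isSatisfiable M

variable (L M) in
theorem infinite_of_model_completeTheory (N : Type*) [L.Structure N] [N ⊨ L.completeTheory M]
    [Infinite M] : Infinite N :=
  (model_infiniteTheory_iff L).1
    (Theory.Model.mono inferInstance (Theory.completeTheory.subset (M := M)))

theorem exists_isTotallyReflexive_of_model (N : Type*) [L.Structure N] [L[[Unit]].Structure N]
    [(L.lhomWithConstants Unit).IsExpansionOn N] [Countable N] [Infinite M] [Countable M]
    (hN : N ⊨ (L.lhomWithConstants Unit).onTheory (L.completeTheory M) ∪
      L.reflexivityTheory M Set.univ)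
    (hcat : Categorical.{_, _, w} ℵ₀ (L.completeTheory M)) : ∃ a : M, L.IsTotallyReflexive a := by
  have : N ⊨ L.completeTheory M := (LHom.onTheory_model _ _).1 (hN.mono Set.subset_union_left)
  have := L.infinite_of_model_completeTheory M N
  obtain ⟨g⟩ := hcat.nonempty_equiv_of_countable N M
  refine ⟨g (L.con ()), fun n R x hx => ?_⟩
  have hRN : RelMap R fun _ : Fin n => (L.con () : N) :=
    (realize_reflexivitySentence R).1
      (hN.realize_of_mem _ (Set.mem_union_right _ ⟨n, R, x, hx, fun _ => trivial, rfl⟩))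
  exact (g.map_rel R _).2 hRN

theorem exists_countable_model_reflexivityTheory [Infinite M]
    (hL : L.card ≤ ℵ₀) (H : ∀ a b : M, ∃ σ : M →[L] M, σ a = σ b) :
    ∃ N : Theory.ModelType.{_, _, w} ((L.lhomWithConstants Unit).onTheory (L.completeTheory M) ∪
      L.reflexivityTheory M Set.univ), Countable N := by
  obtain ⟨N₀⟩ := isSatisfiable_reflexivityTheory H
  let _ : L.Structure N₀ := (L.lhomWithConstants Unit).reduct N₀
  have : N₀ ⊨ L.completeTheory M :=
    (LHom.onTheory_model _ _).1 (N₀.is_model.mono Set.subset_union_left)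
  obtain ⟨N, hN⟩ := Theory.exists_model_card_eq
    ⟨N₀, L.infinite_of_model_completeTheory M N₀⟩ ℵ₀ le_rfl (by simpa using hL)
  exact ⟨N, Cardinal.mk_le_aleph0_iff.1 hN.le⟩

theorem exists_isTotallyReflexive_of_categorical [Countable M] [Infinite M]
    (hL : L.card ≤ ℵ₀) (hcat : Categorical.{_, _, w} ℵ₀ (L.completeTheory M))
    (H : ∀ a b : M, ∃ σ : M →[L] M, σ a = σ b) : ∃ a : M, L.IsTotallyReflexive a := by
  obtain ⟨N, hN⟩ : ∃ N : Theory.ModelType.{_, _, w} _, Countable N :=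
    exists_countable_model_reflexivityTheory hL H
  let _ : L.Structure N := (L.lhomWithConstants Unit).reduct N
  exact exists_isTotallyReflexive_of_model N N.is_model hcat

end FirstOrder.Language

/-- An ℵ₀-categorical structure is contractible (has a constant endomorphism) iff any two
finite tuples of the same length can be merged by an endomorphism. -/
theorem contractible_iff_tuples_mergeable (L : Language) [L.IsRelational]
    (hL : L.card ≤ Cardinal.aleph0) (M : Type*) [L.Structure M] [Countable M] [Nonempty M]
    (hcat : Cardinal.Categorical Cardinal.aleph0 (L.completeTheory M)) :
    (∃ (h : M →[L] M) (c : M), ∀ x, h x = c) ↔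
      ∀ (k : ℕ) (c₀ c₁ : Fin k → M), ∃ σ : M →[L] M, ⇑σ ∘ c₀ = ⇑σ ∘ c₁ := by
  refine ⟨fun ⟨h, c, hc⟩ _ _ _ => ⟨h, funext fun _ => by simp [hc]⟩, fun H => ?_⟩
  have hpair : ∀ a b : M, ∃ σ : M →[L] M, σ a = σ b := fun a b =>
    (H 1 (fun _ => a) fun _ => b).imp fun _ hσ => congrFun hσ 0
  obtain ⟨a, ha⟩ : ∃ a : M, L.IsTotallyReflexive a := by
    cases finite_or_infinite M
    · exact exists_isTotallyReflexive_of_finite hpair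
    · exact exists_isTotallyReflexive_of_categorical hL hcat hpair
  exact ⟨Hom.const a ha, a, fun _ => rfl⟩
end
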